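/- Let d ≥ 1 and let φ : ℝ^d → ℝ be Lipschitz (with some constant K ≥ 0). For t > 0 set ψ_t(y) = ‖y‖²/2 + t·φ(y), ψ_t*(x) = sup_y (⟨x,y⟩ − ψ_t(y)), ψ_t**(y) = sup_x (⟨x,y⟩ − ψ_t*(x)), Θ_t = {y : ψ_t**(y) = ψ_t(y)}, and Σ_t = {y : ψ_t** is strictly convex at y}. Then: (i) Σ_t ⊆ Θ_t for every t > 0; (ii) Θ_t ⊆ Θ_s whenever 0 < s ≤ t; (iii) Σ_t ⊆ Σ_s whenever 0 < s ≤ t. -/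

import Mathlib

/-!
Write `q = ‖·‖²/2`, which is its own Legendre transform, and `θ = s / t ∈ (0, 1]`, so that
`ψ_s = (1 - θ) q + θ ψ_t`. Conjugating this convex combination gives
`ψ_s* ((1 - θ) y + θ x) ≤ (1 - θ) q y + θ ψ_t* x`, and conjugating once more
`(1 - θ) q + θ ψ_t** ≤ ψ_s** ≤ ψ_s`. Hence `ψ_t**(y) = ψ_t(y)` forces `ψ_s**(y) = ψ_s(y)`, and at
such a point a strict supporting hyperplane of `ψ_t**` with slope `x` yields one of `ψ_s**` with
slope `(1 - θ) y + θ x`. For `Σ_t ⊆ Θ_t`: the Lipschitz bound makes `ψ_t` grow quadratically, so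
the supremum defining `ψ_t*(x)` is attained at some `z₀`; the strict minimum of `ψ_t** - ⟪x, ·⟫`
at `y` forces `z₀ = y`, and then `ψ_t(y) ≤ ψ_t**(y)`.
-/

open scoped RealInnerProductSpace
noncomputable section

/-- Legendre transform: `f*(x) = sup_y (⟨x,y⟩ − f(y))`. -/
def conj {d : ℕ} (f : EuclideanSpace ℝ (Fin d) → ℝ)
    (x : EuclideanSpace ℝ (Fin d)) : ℝ :=
  ⨆ y : EuclideanSpace ℝ (Fin d), (⟪x, y⟫ - f y)

/-- `ψ_t(y) = ‖y‖²/2 + t φ(y)`. -/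
def psiFun {d : ℕ} (φ : EuclideanSpace ℝ (Fin d) → ℝ) (t : ℝ)
    (y : EuclideanSpace ℝ (Fin d)) : ℝ :=
  ‖y‖ ^ 2 / 2 + t * φ y

/-- The touching set `Θ_t = {y : ψ_t**(y) = ψ_t(y)}`. -/
def thetaSet {d : ℕ} (φ : EuclideanSpace ℝ (Fin d) → ℝ) (t : ℝ) :
    Set (EuclideanSpace ℝ (Fin d)) :=
  {y | conj (conj (psiFun φ t)) y = psiFun φ t y}

/-- `g` is strictly convex at `y`: some subgradient `x ∈ ∂g(y)` is such that
`z ↦ g(z) − ⟨x,z⟩` has a strict global minimum at `y`. -/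
def StrictlyConvexAt {d : ℕ} (g : EuclideanSpace ℝ (Fin d) → ℝ)
    (y : EuclideanSpace ℝ (Fin d)) : Prop :=
  ∃ x : EuclideanSpace ℝ (Fin d),
    (∀ z, g z ≥ g y + ⟪x, z - y⟫) ∧
    (∀ z, z ≠ y → g y - ⟪x, y⟫ < g z - ⟪x, z⟫)

/-- `Σ_t = {y : ψ_t** is strictly convex at y}`. -/
def sigmaSet {d : ℕ} (φ : EuclideanSpace ℝ (Fin d) → ℝ) (t : ℝ) :
    Set (EuclideanSpace ℝ (Fin d)) :=
  {y | StrictlyConvexAt (conj (conj (psiFun φ t))) y}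

open Set Filter

section Conjugate

variable {d : ℕ}

/-- Without this, `conj f x` takes the junk value `0` wherever the supremum is infinite. -/
def HasFiniteConj (f : EuclideanSpace ℝ (Fin d) → ℝ) : Prop :=
  ∀ x, BddAbove (range fun y => ⟪x, y⟫ - f y)

variable {g h : EuclideanSpace ℝ (Fin d) → ℝ} {θ : ℝ}

theorem inner_sub_le_conj (hg : HasFiniteConj g) (x y : EuclideanSpace ℝ (Fin d)) :
    ⟪x, y⟫ - g y ≤ conj g x :=
  le_ciSup (hg x) y

theorem conj_conj_le (hg : HasFiniteConj g) (y : EuclideanSpace ℝ (Fin d)) :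
    conj (conj g) y ≤ g y :=
  ciSup_le fun x => by linarith [inner_sub_le_conj hg x y, real_inner_comm x y]

theorem HasFiniteConj.conj (hg : HasFiniteConj g) : HasFiniteConj (conj g) := by
  refine fun y => ⟨g y, ?_⟩
  rintro _ ⟨x, rfl⟩
  linarith [inner_sub_le_conj hg x y, real_inner_comm x y]

theorem inner_sub_half_sq_norm_le (x y : EuclideanSpace ℝ (Fin d)) :
    ⟪x, y⟫ - ‖y‖ ^ 2 / 2 ≤ ‖x‖ ^ 2 / 2 := by
  nlinarith [real_inner_le_norm x y, sq_nonneg (‖x‖ - ‖y‖)]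

theorem strictlyConvexAt_of_lt {y : EuclideanSpace ℝ (Fin d)} (x : EuclideanSpace ℝ (Fin d))
    (hx : ∀ z, z ≠ y → g y - ⟪x, y⟫ < g z - ⟪x, z⟫) : StrictlyConvexAt g y := by
  refine ⟨x, fun z => ?_, hx⟩
  rcases eq_or_ne z y with rfl | hzy
  · simp
  · linarith [hx z hzy, inner_sub_right (𝕜 := ℝ) x z y]

theorem conj_interp_le (hg : HasFiniteConj g)
    (hgh : ∀ z, h z = (1 - θ) * (‖z‖ ^ 2 / 2) + θ * g z) (hθ₀ : 0 ≤ θ) (hθ₁ : θ ≤ 1)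
    (x y : EuclideanSpace ℝ (Fin d)) :
    conj h ((1 - θ) • x + θ • y) ≤ (1 - θ) * (‖x‖ ^ 2 / 2) + θ * conj g y := by
  refine ciSup_le fun z => ?_
  rw [hgh, inner_add_left, real_inner_smul_left, real_inner_smul_left]
  nlinarith [mul_le_mul_of_nonneg_left (inner_sub_half_sq_norm_le x z) (sub_nonneg.2 hθ₁),
    mul_le_mul_of_nonneg_left (inner_sub_le_conj hg y z) hθ₀]

theorem interp_conj_conj_le (hg : HasFiniteConj g) (hh : HasFiniteConj h)
    (hgh : ∀ z, h z = (1 - θ) * (‖z‖ ^ 2 / 2) + θ * g z) (hθ₀ : 0 ≤ θ) (hθ₁ : θ ≤ 1)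
    (y : EuclideanSpace ℝ (Fin d)) :
    (1 - θ) * (‖y‖ ^ 2 / 2) + θ * conj (conj g) y ≤ conj (conj h) y := by
  suffices ∀ x, θ * (⟪y, x⟫ - conj g x) ≤ conj (conj h) y - (1 - θ) * (‖y‖ ^ 2 / 2) by
    have := ciSup_le this
    rw [← Real.mul_iSup_of_nonneg hθ₀] at this
    exact le_sub_iff_add_le'.1 this
  intro x
  have hx := inner_sub_le_conj hh.conj y ((1 - θ) • y + θ • x)
  rw [inner_add_right, real_inner_smul_right, real_inner_smul_right,
    real_inner_self_eq_norm_sq] at hx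
  linarith [conj_interp_le hg hgh hθ₀ hθ₁ y x]

theorem conj_conj_interp_eq (hg : HasFiniteConj g) (hh : HasFiniteConj h)
    (hgh : ∀ z, h z = (1 - θ) * (‖z‖ ^ 2 / 2) + θ * g z) (hθ₀ : 0 ≤ θ) (hθ₁ : θ ≤ 1)
    {y : EuclideanSpace ℝ (Fin d)} (hy : conj (conj g) y = g y) : conj (conj h) y = h y :=
  le_antisymm (conj_conj_le hh y) <| by
    simpa only [hy, ← hgh] using interp_conj_conj_le hg hh hgh hθ₀ hθ₁ y

theorem StrictlyConvexAt.interp (hg : HasFiniteConj g) (hh : HasFiniteConj h)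
    (hgh : ∀ z, h z = (1 - θ) * (‖z‖ ^ 2 / 2) + θ * g z) (hθ₀ : 0 < θ) (hθ₁ : θ ≤ 1)
    {y : EuclideanSpace ℝ (Fin d)} (hy : StrictlyConvexAt (conj (conj g)) y)
    (hyg : conj (conj g) y = g y) :
    StrictlyConvexAt (conj (conj h)) y := by
  obtain ⟨x, -, hx⟩ := hy
  -- `conj (conj h) ≥ (1 - θ) q + θ conj (conj g)`, with equality at `y`; after subtracting the
  -- slopes `y` and `x`, both summands are minimal at `y`, the second one strictly
  refine strictlyConvexAt_of_lt ((1 - θ) • y + θ • x) fun z hzy => ?_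
  have hq : ‖y‖ ^ 2 / 2 - ⟪y, y⟫ ≤ ‖z‖ ^ 2 / 2 - ⟪y, z⟫ := by
    nlinarith [inner_sub_half_sq_norm_le z y, real_inner_comm y z, real_inner_self_eq_norm_sq y]
  simp only [inner_add_left, real_inner_smul_left]
  nlinarith [interp_conj_conj_le hg hh hgh hθ₀.le hθ₁ z, conj_conj_le hh y, hgh y,
    mul_le_mul_of_nonneg_left hq (sub_nonneg.2 hθ₁), mul_lt_mul_of_pos_left (hx z hzy) hθ₀]

theorem conj_conj_eq_of_strictlyConvexAt (hg : HasFiniteConj g)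
    (hmax : ∀ x, ∃ z₀, ∀ z, ⟪x, z⟫ - g z ≤ ⟪x, z₀⟫ - g z₀) {y : EuclideanSpace ℝ (Fin d)}
    (hy : StrictlyConvexAt (conj (conj g)) y) : conj (conj g) y = g y := by
  obtain ⟨x, -, hx⟩ := hy
  obtain ⟨z₀, hz₀⟩ := hmax x
  have hconj : conj g x ≤ ⟪x, z₀⟫ - g z₀ := ciSup_le hz₀
  have hyoung : ⟪y, x⟫ - conj g x ≤ conj (conj g) y := inner_sub_le_conj hg.conj y x
  -- the maximiser `z₀` also minimises `conj (conj g) - ⟪x, ·⟫`, whose strict minimum is at `y`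
  obtain rfl : z₀ = y := by
    by_contra hne
    linarith [hx z₀ hne, conj_conj_le hg z₀, real_inner_comm x y]
  exact le_antisymm (conj_conj_le hg z₀) (by linarith [real_inner_comm x z₀])

end Conjugate

section Psi

variable {d : ℕ} {φ : EuclideanSpace ℝ (Fin d) → ℝ} {K : NNReal} {s t : ℝ}

theorem inner_sub_psiFun_le (hφ : LipschitzWith K φ) (ht : 0 ≤ t)
    (x z : EuclideanSpace ℝ (Fin d)) :
    ⟪x, z⟫ - psiFun φ t z ≤ (‖x‖ + t * K) ^ 2 + t * |φ 0| - ‖z‖ ^ 2 / 4 := by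
  have hφz : φ 0 - φ z ≤ K * ‖z‖ := by
    simpa [Real.dist_eq, dist_eq_norm] using (le_abs_self _).trans (hφ.dist_le_mul 0 z)
  unfold psiFun
  nlinarith [real_inner_le_norm x z, mul_le_mul_of_nonneg_left hφz ht,
    mul_le_mul_of_nonneg_left (neg_abs_le (φ 0)) ht, sq_nonneg (‖x‖ + t * K - ‖z‖ / 2)]

theorem hasFiniteConj_psiFun (hφ : LipschitzWith K φ) (ht : 0 ≤ t) :
    HasFiniteConj (psiFun φ t) := by
  refine fun x => ⟨(‖x‖ + t * K) ^ 2 + t * |φ 0|, ?_⟩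
  rintro _ ⟨z, rfl⟩
  linarith [inner_sub_psiFun_le hφ ht x z, sq_nonneg ‖z‖]

theorem exists_forall_inner_sub_psiFun_le (hφ : LipschitzWith K φ) (ht : 0 ≤ t)
    (x : EuclideanSpace ℝ (Fin d)) :
    ∃ z₀, ∀ z, ⟪x, z⟫ - psiFun φ t z ≤ ⟪x, z₀⟫ - psiFun φ t z₀ := by
  have hcont : Continuous fun z => ⟪x, z⟫ - psiFun φ t z := by
    have := hφ.continuous
    unfold psiFun
    fun_prop
  have hcoercive : Tendsto (fun z : EuclideanSpace ℝ (Fin d) =>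
      (‖x‖ + t * K) ^ 2 + t * |φ 0| - ‖z‖ ^ 2 / 4) (cocompact _) atBot := by
    simp only [sub_eq_add_neg]
    exact tendsto_atBot_add_const_left _ _ <| tendsto_neg_atTop_atBot.comp <|
      (((tendsto_pow_atTop two_ne_zero).comp tendsto_norm_cocompact_atTop).atTop_div_const
        (by norm_num))
  exact hcont.exists_forall_ge (tendsto_atBot_mono (inner_sub_psiFun_le hφ ht x) hcoercive)

theorem psiFun_eq_interp (ht : t ≠ 0) (z : EuclideanSpace ℝ (Fin d)) :
    psiFun φ s z = (1 - s / t) * (‖z‖ ^ 2 / 2) + s / t * psiFun φ t z := by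
  unfold psiFun
  field_simp
  ring

theorem sigmaSet_subset_thetaSet (hφ : LipschitzWith K φ) (ht : 0 ≤ t) :
    sigmaSet φ t ⊆ thetaSet φ t := fun _ hy =>
  conj_conj_eq_of_strictlyConvexAt (hasFiniteConj_psiFun hφ ht)
    (exists_forall_inner_sub_psiFun_le hφ ht) hy

theorem thetaSet_subset_of_le (hφ : LipschitzWith K φ) (hs : 0 < s) (hst : s ≤ t) :
    thetaSet φ t ⊆ thetaSet φ s := fun _ hy =>
  conj_conj_interp_eq (hasFiniteConj_psiFun hφ (hs.le.trans hst)) (hasFiniteConj_psiFun hφ hs.le)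
    (psiFun_eq_interp (hs.trans_le hst).ne') (div_nonneg hs.le (hs.le.trans hst))
    (div_le_one_of_le₀ hst (hs.le.trans hst)) hy

theorem sigmaSet_subset_of_le (hφ : LipschitzWith K φ) (hs : 0 < s) (hst : s ≤ t) :
    sigmaSet φ t ⊆ sigmaSet φ s := fun _ hy =>
  have ht := hs.trans_le hst
  hy.interp (hasFiniteConj_psiFun hφ ht.le) (hasFiniteConj_psiFun hφ hs.le)
    (psiFun_eq_interp ht.ne') (div_pos hs ht) (div_le_one_of_le₀ hst ht.le)
    (sigmaSet_subset_thetaSet hφ ht.le hy)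

end Psi

theorem stmt14_general (d : ℕ) (K : ℝ)
    (φ : EuclideanSpace ℝ (Fin d) → ℝ)
    (hLip : ∀ y z, |φ y - φ z| ≤ K * ‖y - z‖) :
    (∀ t : ℝ, 0 < t → sigmaSet φ t ⊆ thetaSet φ t) ∧
    (∀ s t : ℝ, 0 < s → s ≤ t → thetaSet φ t ⊆ thetaSet φ s) ∧
    (∀ s t : ℝ, 0 < s → s ≤ t → sigmaSet φ t ⊆ sigmaSet φ s) := by
  have hφ : LipschitzWith K.toNNReal φ := .of_dist_le_mul fun y z => by
    rw [Real.dist_eq, dist_eq_norm]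
    exact (hLip y z).trans (mul_le_mul_of_nonneg_right (Real.le_coe_toNNReal K) (norm_nonneg _))
  exact ⟨fun t ht => sigmaSet_subset_thetaSet hφ ht.le,
    fun s t hs hst => thetaSet_subset_of_le hφ hs hst,
    fun s t hs hst => sigmaSet_subset_of_le hφ hs hst⟩

theorem stmt14 (d : ℕ) (hd : 1 ≤ d) (K : ℝ) (hK : 0 ≤ K)
    (φ : EuclideanSpace ℝ (Fin d) → ℝ)
    (hLip : ∀ y z, |φ y - φ z| ≤ K * ‖y - z‖) :
    (∀ t : ℝ, 0 < t → sigmaSet φ t ⊆ thetaSet φ t) ∧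
    (∀ s t : ℝ, 0 < s → s ≤ t → thetaSet φ t ⊆ thetaSet φ s) ∧
    (∀ s t : ℝ, 0 < s → s ≤ t → sigmaSet φ t ⊆ sigmaSet φ s) :=
  stmt14_general d K φ hLip
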